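/- In the zonotope setting, let i, t ∈ I with i ≠ t. If σ_i = σ_t, then Z_A^i ∩ Z_A^t = ∅ and Z_B^i ∩ Z_B^t = ∅. -/

import Mathlib

open scoped Classical

noncomputable section

/-- The family of `k + 1` vectors `w¹, …, w^k, w^j` indexed by `I = {1,…,k} ∪ {j}`,
realized as `Option (Fin k)` with `none` playing the role of the extra index `j`. -/
def vecs {k : ℕ} (w : Fin k → (Fin k → ℝ)) (wj : Fin k → ℝ) :
    Option (Fin k) → (Fin k → ℝ) :=
  fun o => o.elim wj w

/-- The signs `σ_i` for `i ∈ I`: for `i ∈ {1,…,k}`,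
`σ_i = sign(det W_{[i→j]} / det [w¹ ⋯ w^k])` where `W_{[i→j]}` is `[w¹ ⋯ w^k]` with
its `i`-th column replaced by `w^j`; and `σ_j = −1`. -/
def sigOf {k : ℕ} (w : Fin k → (Fin k → ℝ)) (wj : Fin k → ℝ) : Option (Fin k) → ℝ :=
  fun o => o.elim (-1) fun i =>
    Real.sign ((Matrix.of fun a l => if l = i then wj a else w l a).det /
      (Matrix.of fun a l => w l a).det)

/-- The open parallelotope `Z_A^i = {∑_{r ∈ I ∖ {i}} λ_r w^r : λ_r ∈ (0,1)}`
if the `k` vectors `{w^r}_{r ∈ I ∖ {i}}` are linearly independent, and `∅`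
otherwise. -/
def ZA {k : ℕ} (w : Fin k → (Fin k → ℝ)) (wj : Fin k → ℝ) (i : Option (Fin k)) :
    Set (Fin k → ℝ) :=
  if LinearIndependent ℝ (fun r : {r : Option (Fin k) // r ≠ i} => vecs w wj r.1) then
    {x | ∃ lam : Option (Fin k) → ℝ,
      (∀ r : Option (Fin k), r ≠ i → lam r ∈ Set.Ioo (0 : ℝ) 1) ∧
      x = ∑ r ∈ Finset.univ.erase i, lam r • vecs w wj r}
  else ∅

/-- The translated open parallelotope `Z_B^i = w^i + Z_A^i`. -/
def ZB {k : ℕ} (w : Fin k → (Fin k → ℝ)) (wj : Fin k → ℝ) (i : Option (Fin k)) :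
    Set (Fin k → ℝ) :=
  (fun y => vecs w wj i + y) '' ZA w wj i

end

/-! Write `w^j = ∑ c_m w^m` (Cramer's rule gives `c_m = det W_{[m→j]} / det W`), so that
`a = (c_1, …, c_k, -1)` is a linear dependence among all `k + 1` vectors with `σ_r = sign a_r`.
Since `w^1, …, w^k` are independent, every dependence is a multiple `d • a`.
A point of `Z_A^i ∩ Z_A^t` gives two coefficient vectors `λ, μ` with `λ_i = 0 < μ_i` and
`μ_t = 0 < λ_t`, so `λ - μ = d • a` has `d a_i < 0 < d a_t`, forcing `σ_i ≠ σ_t`.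
For `Z_B` the coefficient of the translating vector is `1` instead of `0`, and all other
coefficients are `< 1`, which reverses both inequalities. -/

theorem Real.mul_nonneg_of_sign_eq {a b : ℝ} (h : Real.sign a = Real.sign b) : 0 ≤ a * b := by
  rcases lt_trichotomy a 0 with ha | rfl | ha <;> rcases lt_trichotomy b 0 with hb | rfl | hb <;>
    simp [Real.sign_of_neg, Real.sign_of_pos, *] at h ⊢ <;> nlinarith

section Dependence

variable {ι R V : Type*} [Fintype ι] [Ring R] [AddCommGroup V] [Module R V]
  {v : Option ι → V} {a : Option ι → R}

theorem sub_eq_smul_of_sum_smul_eq (hv : LinearIndependent R (v ∘ some)) (ha : a none = -1)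
    (hrel : ∑ r, a r • v r = 0) {lam mu : Option ι → R}
    (h : ∑ r, lam r • v r = ∑ r, mu r • v r) :
    lam - mu = (mu none - lam none) • a := by
  set g := lam - mu
  have hg : ∑ r, g r • v r = 0 := by
    simp only [g, Pi.sub_apply, sub_smul, Finset.sum_sub_distrib, h, sub_self]
  have hcomb : ∑ m, (g (some m) + g none * a (some m)) • v (some m) = 0 := by
    have : ∑ r, (g r + g none * a r) • v r = 0 := by
      simp only [add_smul, mul_smul, Finset.sum_add_distrib, ← Finset.smul_sum, hg, hrel,
        smul_zero, add_zero]
    rwa [Fintype.sum_option, ha, mul_neg_one, add_neg_cancel, zero_smul, zero_add] at this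
  have hsome := Fintype.linearIndependent_iff.mp hv _ hcomb
  rw [show mu none - lam none = -g none by simp [g]]
  ext (_ | m)
  · simp [ha]
  · simp only [Pi.smul_apply, smul_eq_mul, neg_mul]
    exact eq_neg_of_add_eq_zero_left (hsome m)

end Dependence

theorem sign_ne_of_sum_smul_eq {ι V : Type*} [Fintype ι] [AddCommGroup V] [Module ℝ V]
    {v : Option ι → V} {a : Option ι → ℝ} (hv : LinearIndependent ℝ (v ∘ some))
    (ha : a none = -1) (hrel : ∑ r, a r • v r = 0) {lam mu : Option ι → ℝ}
    (h : ∑ r, lam r • v r = ∑ r, mu r • v r) {i t : Option ι}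
    (hi : lam i < mu i) (ht : mu t < lam t) :
    Real.sign (a i) ≠ Real.sign (a t) := by
  intro hs
  have hdiff := sub_eq_smul_of_sum_smul_eq hv ha hrel h
  have hdi := congrFun hdiff i
  have hdt := congrFun hdiff t
  simp only [Pi.sub_apply, Pi.smul_apply, smul_eq_mul] at hdi hdt
  set d := mu none - lam none
  have : 0 ≤ (d * a i) * (d * a t) := by
    rw [show (d * a i) * (d * a t) = d ^ 2 * (a i * a t) by ring]
    exact mul_nonneg (sq_nonneg d) (Real.mul_nonneg_of_sign_eq hs)
  nlinarith

section Zonotope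

variable {k : ℕ} (w : Fin k → (Fin k → ℝ)) (wj : Fin k → ℝ)

noncomputable def dependenceCoeffs : Option (Fin k) → ℝ :=
  fun o => o.elim (-1) fun m =>
    (Matrix.of fun a l => if l = m then wj a else w l a).det / (Matrix.of fun a l => w l a).det

theorem sigOf_eq_sign_dependenceCoeffs (r : Option (Fin k)) :
    sigOf w wj r = Real.sign (dependenceCoeffs w wj r) := by
  cases r with
  | none => exact (Real.sign_of_neg neg_one_lt_zero).symm
  | some m => rfl

theorem linearIndependent_vecs_some (hdet : (Matrix.of fun a l => w l a).det ≠ 0) :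
    LinearIndependent ℝ (vecs w wj ∘ some) :=
  Matrix.linearIndependent_cols_of_det_ne_zero hdet

theorem sum_dependenceCoeffs_smul_vecs (hdet : (Matrix.of fun a l => w l a).det ≠ 0) :
    ∑ r, dependenceCoeffs w wj r • vecs w wj r = 0 := by
  set W : Matrix (Fin k) (Fin k) ℝ := Matrix.of fun a l => w l a
  have hcramer := Matrix.mulVec_cramer W wj
  have hcol (m : Fin k) :
      W.updateCol m wj = Matrix.of fun a l => if l = m then wj a else w l a := by
    ext a l
    simp [W, Matrix.updateCol_apply]
  have hwj_expand : wj = ∑ m, dependenceCoeffs w wj (some m) • w m := by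
    apply smul_right_injective _ hdet
    dsimp only
    rw [← hcramer, Finset.smul_sum]
    ext a
    simp [W, dependenceCoeffs, Matrix.mulVec, dotProduct, Matrix.cramer_apply, hcol,
      Finset.sum_apply, mul_comm]
    exact Finset.sum_congr rfl fun m _ => by rw [mul_left_comm, mul_div_cancel₀ _ hdet]
  rw [Fintype.sum_option]
  change (-1 : ℝ) • wj + ∑ m, dependenceCoeffs w wj (some m) • w m = 0
  rw [← hwj_expand, neg_one_smul, neg_add_cancel]

theorem exists_coeffs_of_mem_ZA {i : Option (Fin k)} {x : Fin k → ℝ} (hx : x ∈ ZA w wj i)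
    (c : ℝ) : ∃ lam : Option (Fin k) → ℝ, lam i = c ∧
      (∀ r, r ≠ i → lam r ∈ Set.Ioo (0 : ℝ) 1) ∧
      c • vecs w wj i + x = ∑ r, lam r • vecs w wj r := by
  unfold ZA at hx
  split_ifs at hx
  · obtain ⟨lam, hlam, rfl⟩ := hx
    refine ⟨Function.update lam i c, Function.update_self .., fun r hr => ?_, ?_⟩
    · rw [Function.update_of_ne hr]
      exact hlam r hr
    · rw [← Finset.add_sum_erase _ _ (Finset.mem_univ i), Function.update_self]
      congr 1
      refine Finset.sum_congr rfl fun r hr => ?_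
      rw [Function.update_of_ne (Finset.ne_of_mem_erase hr)]
  · exact absurd hx (Set.notMem_empty x)

end Zonotope

theorem ZA_ZB_disjoint_of_equal_signs_general (k : ℕ)
    (w : Fin k → (Fin k → ℝ)) (wj : Fin k → ℝ)
    (hdet : (Matrix.of fun a l => w l a).det ≠ 0)
    (i t : Option (Fin k)) (hit : i ≠ t)
    (hsig : sigOf w wj i = sigOf w wj t) :
    ZA w wj i ∩ ZA w wj t = ∅ ∧ ZB w wj i ∩ ZB w wj t = ∅ := by
  have hv := linearIndependent_vecs_some w wj hdet
  have hrel := sum_dependenceCoeffs_smul_vecs w wj hdet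
  rw [sigOf_eq_sign_dependenceCoeffs, sigOf_eq_sign_dependenceCoeffs] at hsig
  refine ⟨Set.eq_empty_iff_forall_notMem.mpr ?_, Set.eq_empty_iff_forall_notMem.mpr ?_⟩
  · rintro x ⟨hxi, hxt⟩
    obtain ⟨lam, hli, hlam, hx⟩ := exists_coeffs_of_mem_ZA w wj hxi 0
    obtain ⟨mu, hmt, hmu, hx'⟩ := exists_coeffs_of_mem_ZA w wj hxt 0
    rw [zero_smul, zero_add] at hx hx'
    refine sign_ne_of_sum_smul_eq hv rfl hrel (hx.symm.trans hx') ?_ ?_ hsig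
    · exact hli ▸ (hmu i hit).1
    · exact hmt ▸ (hlam t hit.symm).1
  · rintro x ⟨⟨y, hyi, rfl⟩, ⟨y', hyt, hx⟩⟩
    obtain ⟨lam, hli, hlam, hy⟩ := exists_coeffs_of_mem_ZA w wj hyi 1
    obtain ⟨mu, hmt, hmu, hy'⟩ := exists_coeffs_of_mem_ZA w wj hyt 1
    rw [one_smul] at hy hy'
    refine sign_ne_of_sum_smul_eq hv rfl hrel (hy'.symm.trans (hx.trans hy)) ?_ ?_ hsig
    · exact hli ▸ (hmu i hit).2
    · exact hmt ▸ (hlam t hit.symm).2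

/-- If `i ≠ t` in `I` and `σ_i = σ_t`, then `Z_A^i ∩ Z_A^t = ∅` and
`Z_B^i ∩ Z_B^t = ∅`. -/
theorem ZA_ZB_disjoint_of_equal_signs (k : ℕ) (hk : 1 ≤ k)
    (w : Fin k → (Fin k → ℝ)) (wj : Fin k → ℝ)
    (hdet : (Matrix.of fun a l => w l a).det ≠ 0)
    (i t : Option (Fin k)) (hit : i ≠ t)
    (hsig : sigOf w wj i = sigOf w wj t) :
    ZA w wj i ∩ ZA w wj t = ∅ ∧ ZB w wj i ∩ ZB w wj t = ∅ :=
  ZA_ZB_disjoint_of_equal_signs_general k w wj hdet i t hit hsig
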